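/- (Integration-by-parts for zeons) If A is an n×n row-stochastic matrix, then for every X ∈ ℚ^{C(n,2)}: X·(I − A^{∨2})·uᵀ = ½·tr(AᵀX̂A). -/

import Mathlib

/-!
Row-stochasticity makes the `(i, j)` row of `A^{∨2}` sum to `1 - (A Aᵀ)ᵢⱼ`: the full double sum
`∑ₖ ∑ₗ Aᵢₖ Aⱼₗ` is `1`, and the permanents collect exactly its off-diagonal terms. Hence the left-hand
side is `∑_{i<j} xᵢⱼ (A Aᵀ)ᵢⱼ`. On the right, `tr(Aᵀ X̂ A) = tr(X̂ A Aᵀ) = ∑ᵢⱼ X̂ᵢⱼ (A Aᵀ)ⱼᵢ`, and since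
`X̂` and `A Aᵀ` are symmetric and `X̂` has zero diagonal, this counts every pair `i < j` twice.
-/

open Matrix BigOperators Filter

/-- Index set of pairs `(i,j)` with `i < j`. -/
abbrev Pairs (n : ℕ) := {p : Fin n × Fin n // p.1 < p.2}

/-- Zeon second power: matrix of 2×2 permanents. -/
def zeonSq {n : ℕ} {R : Type*} [CommRing R] (A : Matrix (Fin n) (Fin n) R) :
    Matrix (Pairs n) (Pairs n) R :=
  Matrix.of fun I J =>
    A I.1.1 J.1.1 * A I.1.2 J.1.2 + A I.1.1 J.1.2 * A I.1.2 J.1.1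

/-- `Mat(X)`: symmetric matrix with zero diagonal built from a vector indexed by pairs. -/
def matOf {n : ℕ} {R : Type*} [CommRing R] (X : Pairs n → R) :
    Matrix (Fin n) (Fin n) R :=
  Matrix.of fun i j =>
    if h : i < j then X ⟨(i, j), h⟩ else if h' : j < i then X ⟨(j, i), h'⟩ else 0

namespace Pairs

variable {n : ℕ}

theorem sum_sum_eq_sum_diag_add_sum {M : Type*} [AddCommMonoid M] (f : Fin n → Fin n → M) :
    ∑ i, ∑ j, f i j = ∑ i, f i i + ∑ I : Pairs n, (f I.1.1 I.1.2 + f I.1.2 I.1.1) := by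
  classical
  let g : Fin n × Fin n → M := fun p => f p.1 p.2
  let lt : Finset (Fin n × Fin n) := Finset.univ.filter fun p => p.1 < p.2
  let gt : Finset (Fin n × Fin n) := Finset.univ.filter fun p => p.2 < p.1
  have hdiag : ∑ p ∈ Finset.univ.filter (fun p : Fin n × Fin n => p.1 = p.2), g p = ∑ i, f i i :=
    Finset.sum_bij' (fun p _ => p.1) (fun i _ => (i, i)) (by simp) (by simp)
      (fun p hp => by ext <;> simp_all) (by simp) (fun p hp => by simp_all [g])
  have hoff : Finset.univ.filter (fun p : Fin n × Fin n => ¬p.1 = p.2) = lt ∪ gt := by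
    ext p
    simp only [Finset.mem_filter, Finset.mem_union, Finset.mem_univ, true_and, lt, gt]
    exact ne_iff_lt_or_gt
  have hdisj : Disjoint lt gt :=
    Finset.disjoint_filter.mpr fun p _ h => not_lt_of_gt h
  have hlt : ∑ p ∈ lt, g p = ∑ I : Pairs n, f I.1.1 I.1.2 :=
    Finset.sum_subtype _ (by simp [lt]) g
  have hgt : ∑ p ∈ gt, g p = ∑ I : Pairs n, f I.1.2 I.1.1 :=
    (Finset.sum_equiv (Equiv.prodComm _ _) (t := lt) (g := fun p => f p.2 p.1)
      (by simp [lt, gt]) fun _ _ => rfl).trans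
      (Finset.sum_subtype _ (by simp [lt]) fun p : Fin n × Fin n => f p.2 p.1)
  rw [← Fintype.sum_prod_type' f, ← Finset.sum_filter_add_sum_filter_not _ fun p => p.1 = p.2]
  rw [hdiag, hoff, Finset.sum_union hdisj, hlt, hgt, Finset.sum_add_distrib]

end Pairs

section Zeon

variable {n : ℕ} {R : Type*} [CommRing R]

theorem matOf_apply_pair (X : Pairs n → R) (I : Pairs n) : matOf X I.1.1 I.1.2 = X I := by
  simp [matOf, I.2]

theorem matOf_apply_pair_swap (X : Pairs n → R) (I : Pairs n) : matOf X I.1.2 I.1.1 = X I := by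
  simp [matOf, I.2, not_lt_of_gt I.2]

theorem matOf_apply_self (X : Pairs n → R) (i : Fin n) : matOf X i i = 0 := by
  simp [matOf]

theorem sum_zeonSq_apply (A : Matrix (Fin n) (Fin n) R) (I : Pairs n) :
    ∑ J, zeonSq A I J = (∑ k, A I.1.1 k) * (∑ l, A I.1.2 l) - (A * Aᵀ) I.1.1 I.1.2 := by
  rw [Finset.sum_mul_sum, Pairs.sum_sum_eq_sum_diag_add_sum, mul_apply]
  simp only [transpose_apply, add_sub_cancel_left]
  rfl

theorem trace_matOf_mul (X : Pairs n → R) (B : Matrix (Fin n) (Fin n) R) :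
    trace (matOf X * B) = ∑ I, X I * (B I.1.2 I.1.1 + B I.1.1 I.1.2) := by
  simp only [trace, diag_apply, mul_apply, Pairs.sum_sum_eq_sum_diag_add_sum, matOf_apply_self,
    zero_mul, Finset.sum_const_zero, zero_add, matOf_apply_pair, matOf_apply_pair_swap, mul_add]

end Zeon

theorem stmt9_general {n : ℕ} (A : Matrix (Fin n) (Fin n) ℚ)
    (hA1 : ∀ i, ∑ j, A i j = 1) (X : Pairs n → ℚ) :
    (X ᵥ* (1 - zeonSq A)) ⬝ᵥ (fun _ => 1) =
      (1 / 2) * Matrix.trace (Aᵀ * matOf X * A) := by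
  have hAAt : (A * Aᵀ)ᵀ = A * Aᵀ := isSymm_mul_transpose_self A
  have hrow : ∀ I, ((1 - zeonSq A) *ᵥ fun _ => 1) I = (A * Aᵀ) I.1.1 I.1.2 := fun I => by
    rw [sub_mulVec, Pi.sub_apply, one_mulVec]
    simp [mulVec, dotProduct, sum_zeonSq_apply, hA1]
  rw [← dotProduct_mulVec, trace_mul_cycle, trace_mul_comm, trace_matOf_mul,
    Finset.mul_sum]
  refine Finset.sum_congr rfl fun I _ => ?_
  rw [hrow, ← transpose_apply (A * Aᵀ) I.1.2, hAAt]
  ring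

theorem stmt9 {n : ℕ} (A : Matrix (Fin n) (Fin n) ℚ)
    (hA0 : ∀ i j, 0 ≤ A i j) (hA1 : ∀ i, ∑ j, A i j = 1) (X : Pairs n → ℚ) :
    (X ᵥ* (1 - zeonSq A)) ⬝ᵥ (fun _ => 1) =
      (1 / 2) * Matrix.trace (Aᵀ * matOf X * A) :=
  stmt9_general A hA1 X
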